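/- Let ℓ ≥ 1 be an integer and let 𝒫 be a finite family of paths on the integer grid (finite nonempty subsets P ⊆ ℤ² whose induced subgraph in the grid graph on ℤ² is a path) such that every point of every P ∈ 𝒫 has x-coordinate in {1, …, ℓ}. Let G be the vertex intersection graph of 𝒫 (two distinct paths adjacent if and only if they share a grid point). Then G has a tree decomposition 𝒯 with independence number α(𝒯) ≤ ℓ; in particular, tree-α(G) ≤ ℓ. -/

import Mathlib

open Classical

/-- A tree decomposition of a graph `G`. -/
structure TreeDecomp {V : Type*} (G : SimpleGraph V) where
  ι : Type
  fin : Fintype ι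
  T : SimpleGraph ι
  isTree : T.IsTree
  bag : ι → Set V
  mem_bag : ∀ v : V, ∃ t, v ∈ bag t
  edge_bag : ∀ ⦃u v : V⦄, G.Adj u v → ∃ t, u ∈ bag t ∧ v ∈ bag t
  bag_connected : ∀ v : V, (T.induce {t | v ∈ bag t}).Connected

/-- `I` is an independent set of `G` contained in `S`, i.e. an independent set of `G[S]`. -/
def IsIndepSetIn {V : Type*} (G : SimpleGraph V) (S : Set V) (I : Finset V) : Prop :=
  ↑I ⊆ S ∧ ∀ u ∈ I, ∀ v ∈ I, u ≠ v → ¬ G.Adj u v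

/-- `α(G[S]) ≤ k`. -/
def IndepLE {V : Type*} (G : SimpleGraph V) (S : Set V) (k : ℕ) : Prop :=
  ∀ I : Finset V, IsIndepSetIn G S I → I.card ≤ k

/-- The independence number of the tree decomposition is at most `k`. -/
def TreeDecomp.IndepNumLE {V : Type*} {G : SimpleGraph V} (td : TreeDecomp G) (k : ℕ) : Prop :=
  ∀ t : td.ι, IndepLE G (td.bag t) k

/-- The tree-independence number of `G` is at most `k`. -/
def treeAlphaLE {V : Type*} (G : SimpleGraph V) (k : ℕ) : Prop :=
  ∃ td : TreeDecomp G, td.IndepNumLE k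

/-- The tree-independence number of `G`. -/
noncomputable def treeAlpha {V : Type*} (G : SimpleGraph V) : ℕ :=
  sInf {k | treeAlphaLE G k}

/-- A layering of `G`, encoded by the function sending a vertex to the index of its layer. -/
def IsLayering {V : Type*} (G : SimpleGraph V) (L : V → ℕ) : Prop :=
  ∀ ⦃u v : V⦄, G.Adj u v → (L u : ℤ) ≤ (L v : ℤ) + 1

/-- The layered tree-independence number of `G` is at most `k`. -/
def layeredTreeAlphaLE {V : Type*} (G : SimpleGraph V) (k : ℕ) : Prop :=
  ∃ (td : TreeDecomp G) (L : V → ℕ), IsLayering G L ∧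
    ∀ (t : td.ι) (i : ℕ), IndepLE G (td.bag t ∩ {v | L v = i}) k

/-- The layered tree-independence number of `G`. -/
noncomputable def layeredTreeAlpha {V : Type*} (G : SimpleGraph V) : ℕ :=
  sInf {k | layeredTreeAlphaLE G k}

/-- The number of elements of the multiset `𝒞` containing `v` (with multiplicity). -/
noncomputable def coverCount {V : Type*} (𝒞 : Multiset (Set V)) (v : V) : ℕ :=
  Multiset.countP (fun C => v ∈ C) 𝒞

/-- `𝒞` is a `β`-general cover: every vertex belongs to at least `β·|𝒞|` elements. -/
def IsGeneralCover {V : Type*} (β : ℝ) (𝒞 : Multiset (Set V)) : Prop :=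
  𝒞 ≠ 0 ∧ ∀ v : V, β * (Multiset.card 𝒞 : ℝ) ≤ (coverCount 𝒞 v : ℝ)

/-- The intersection graph of an (indexed) family of sets. -/
def intersectionGraph {ι : Type*} {α : Type*} (D : ι → Set α) : SimpleGraph ι where
  Adj i j := i ≠ j ∧ (D i ∩ D j).Nonempty
  symm := by
    constructor
    rintro i j ⟨hne, x, hx1, hx2⟩
    exact ⟨hne.symm, x, hx2, hx1⟩
  loopless := by
    constructor
    rintro i ⟨hne, -⟩
    exact hne rfl

/-- The `p`-th power of a graph. -/
def gpower {V : Type*} (G : SimpleGraph V) (p : ℕ) : SimpleGraph V where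
  Adj u v := u ≠ v ∧ ∃ w : G.Walk u v, w.length ≤ p
  symm := by
    constructor
    rintro u v ⟨hne, w, hw⟩
    exact ⟨hne.symm, w.reverse, by simpa using hw⟩
  loopless := by
    constructor
    rintro u ⟨hne, -⟩
    exact hne rfl

/-- The axis-aligned closed hypercube of side length `r` with lower corner `x`. -/
def cube (d : ℕ) (x : EuclideanSpace ℝ (Fin d)) (r : ℝ) : Set (EuclideanSpace ℝ (Fin d)) :=
  {y | ∀ i, x i ≤ y i ∧ y i ≤ x i + r}

/-- The size of an object: the side length of its smallest enclosing axis-aligned hypercube. -/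
noncomputable def objSize (d : ℕ) (O : Set (EuclideanSpace ℝ (Fin d))) : ℝ :=
  sInf {r : ℝ | 0 ≤ r ∧ ∃ x, O ⊆ cube d x r}

/-- The collection `O` is `c`-fat. -/
def IsFat {ι : Type*} (d : ℕ) (c : ℝ) (O : ι → Set (EuclideanSpace ℝ (Fin d))) : Prop :=
  ∀ r : ℝ, 0 < r → ∀ x : EuclideanSpace ℝ (Fin d), ∀ P : Finset ι,
    (∀ i ∈ P, ∀ j ∈ P, i ≠ j → Disjoint (O i) (O j)) →
    (∀ i ∈ P, (O i ∩ cube d x r).Nonempty ∧ r ≤ objSize d (O i)) →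
    ∃ pts : Finset (EuclideanSpace ℝ (Fin d)),
      (pts.card : ℝ) ≤ c ∧ ∀ i ∈ P, ∃ p ∈ pts, p ∈ O i

/-- The `n`-dimensional grid graph of width `n`. -/
def gridGraphN (n : ℕ) : SimpleGraph (Fin n → Fin n) where
  Adj a b := ∑ i, ((a i : ℤ) - (b i : ℤ)).natAbs = 1
  symm := by
    constructor
    intro a b h
    rw [← h]
    exact Finset.sum_congr rfl fun i _ => by omega
  loopless := by
    constructor
    intro a h
    simp at h

/-- The grid graph on `ℤ²`. -/
def latticeGraph : SimpleGraph (ℤ × ℤ) where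
  Adj p q := (p.1 - q.1).natAbs + (p.2 - q.2).natAbs = 1
  symm := by
    constructor
    intro p q h
    omega
  loopless := by
    constructor
    intro p h
    simp at h

/-- `P` is (the vertex set of) a path on the integer grid: a finite nonempty subset of `ℤ²`
whose induced subgraph in the grid graph is a path. -/
def IsGridPath (P : Set (ℤ × ℤ)) : Prop :=
  P.Finite ∧ P.Nonempty ∧ (latticeGraph.induce P).IsTree ∧
    ∀ v : P, ((latticeGraph.induce P).neighborSet v).ncard ≤ 2

/-!
Slice the grid into rows and take a path-shaped tree decomposition whose bag at row `y` consists
of the grid paths meeting that row. A grid path is connected and moves by at most one row per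
step, so the rows it meets form an interval and its bags are consecutive. Pairwise disjoint
paths in the bag of row `y` meet that row in distinct points, all among `(1, y), …, (ℓ, y)`.
-/

namespace SimpleGraph

theorem pathGraph_isAcyclic (n : ℕ) : (pathGraph n).IsAcyclic := by
  refine isAcyclic_iff_forall_adj_isBridge.mpr fun u v huv ↦ ?_
  wlog h : u.val + 1 = v.val generalizing u v
  · rw [Sym2.eq_swap]
    exact this v u huv.symm (by rw [pathGraph_adj] at huv; omega)
  rw [isBridge_iff]
  rintro ⟨w⟩
  obtain ⟨⟨⟨x, y⟩, hxy⟩, -, hx, hy⟩ := w.exists_boundary_dart {x | x ≤ u} (le_refl u)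
    (show ¬ v ≤ u by rw [Fin.le_def]; omega)
  replace hx : x.val ≤ u.val := hx
  replace hy : ¬ y.val ≤ u.val := hy
  simp only [deleteEdges_adj, pathGraph_adj, Set.mem_singleton_iff, Sym2.eq_iff] at hxy
  obtain ⟨hxy, hne⟩ := hxy
  exact hne (.inl ⟨Fin.ext (by omega), Fin.ext (by omega)⟩)

theorem pathGraph_isTree (n : ℕ) : (pathGraph (n + 1)).IsTree :=
  ⟨pathGraph_connected n, pathGraph_isAcyclic (n + 1)⟩

theorem pathGraph_induce_connected {n : ℕ} {S : Set (Fin n)} (hS : S.OrdConnected)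
    (hne : S.Nonempty) : ((pathGraph n).induce S).Connected := by
  have reach : ∀ (k : ℕ) (u v : S), (v : Fin n).val = (u : Fin n).val + k →
      ((pathGraph n).induce S).Reachable u v := by
    intro k
    induction k with
    | zero => intro u v h; rw [Subtype.ext (Fin.ext h)]
    | succ k ih =>
      intro u v h
      have hlt : (u : Fin n).val + 1 < n := by have := (v : Fin n).isLt; omega
      let w : S := ⟨⟨(u : Fin n).val + 1, hlt⟩,
        hS.out u.2 v.2 ⟨Fin.le_def.2 (by simp), Fin.le_def.2 (by simp only; omega)⟩⟩
      have huw : ((pathGraph n).induce S).Adj u w := by simp [w, pathGraph_adj]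
      exact huw.reachable.trans (ih w v (by simp [w]; omega))
  have : Nonempty S := hne.to_subtype
  refine ⟨fun u v ↦ ?_⟩
  rcases le_total (u : Fin n) v with h | h
  · exact reach ((v : Fin n).val - (u : Fin n).val) u v (by rw [Fin.le_def] at h; omega)
  · exact (reach ((u : Fin n).val - (v : Fin n).val) v u (by rw [Fin.le_def] at h; omega)).symm

theorem Walk.exists_mem_support_eq {V : Type*} {G : SimpleGraph V} (f : V → ℤ)
    (hf : ∀ ⦃a b⦄, G.Adj a b → f b ≤ f a + 1) {u v : V} (p : G.Walk u v) {y : ℤ}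
    (hu : f u ≤ y) (hv : y ≤ f v) : ∃ x ∈ p.support, f x = y := by
  by_cases huy : f u = y
  · exact ⟨u, p.start_mem_support, huy⟩
  -- the first step leaving `{x | f x < y}` lands exactly on level `y`
  obtain ⟨d, hd, hx, hy⟩ :=
    p.exists_boundary_dart {x | f x < y} (by simp; omega) (by simp; omega)
  simp only [Set.mem_ofPred_eq, not_lt] at hx hy
  exact ⟨d.snd, p.dart_snd_mem_support_of_mem_darts hd, by have := hf d.adj; omega⟩

theorem ordConnected_image_of_preconnected_induce {V : Type*} {G : SimpleGraph V}
    (f : V → ℤ) (hf : ∀ ⦃a b⦄, G.Adj a b → f b ≤ f a + 1) {s : Set V}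
    (hs : (G.induce s).Preconnected) : (f '' s).OrdConnected := by
  refine ⟨?_⟩
  rintro _ ⟨p, hp, rfl⟩ _ ⟨q, hq, rfl⟩ y ⟨hpy, hyq⟩
  obtain ⟨w⟩ := hs ⟨p, hp⟩ ⟨q, hq⟩
  obtain ⟨x, -, rfl⟩ := w.exists_mem_support_eq (f ∘ Subtype.val) (fun _ _ h ↦ hf h) hpy hyq
  exact ⟨x, x.2, rfl⟩

end SimpleGraph

open SimpleGraph

theorem indepLE_intersectionGraph_of_inter_nonempty {ι α : Type*} (D : ι → Set α) (B : Set ι)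
    (S : Finset α) (hB : ∀ i ∈ B, (D i ∩ S).Nonempty) : IndepLE (intersectionGraph D) B S.card := by
  rintro I ⟨hIB, hI⟩
  refine Finset.card_le_card_of_forall_subsingleton (fun i p ↦ p ∈ D i) (fun i hi ↦ ?_) ?_
  · obtain ⟨p, hpD, hpS⟩ := hB i (hIB hi)
    exact ⟨p, hpS, hpD⟩
  · intro p _ i hi j hj
    by_contra hij
    exact hI i hi.1 j hj.1 hij ⟨hij, p, hi.2, hj.2⟩

def TreeDecomp.ofLevels {ι : Type} {α : Type*} (D : ι → Set α) (f : α → ℤ) (a : ℤ) (N : ℕ)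
    (hne : ∀ i, (D i).Nonempty) (hconn : ∀ i, (f '' D i).OrdConnected)
    (hrange : ∀ i, ∀ p ∈ D i, f p ∈ Set.Icc a (a + N)) :
    TreeDecomp (intersectionGraph D) where
  ι := Fin (N + 1)
  fin := inferInstance
  T := pathGraph (N + 1)
  isTree := pathGraph_isTree N
  bag t := {i | a + (t : ℤ) ∈ f '' D i}
  mem_bag i := by
    obtain ⟨p, hp⟩ := hne i
    obtain ⟨h₁, h₂⟩ := hrange i p hp
    exact ⟨⟨(f p - a).toNat, by omega⟩, p, hp, by simp; omega⟩
  edge_bag := by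
    rintro i j ⟨-, p, hpi, hpj⟩
    obtain ⟨h₁, h₂⟩ := hrange i p hpi
    refine ⟨⟨(f p - a).toNat, by omega⟩, ⟨p, hpi, ?_⟩, ⟨p, hpj, ?_⟩⟩ <;> simp <;> omega
  bag_connected i := by
    obtain ⟨p, hp⟩ := hne i
    obtain ⟨h₁, h₂⟩ := hrange i p hp
    have hmono : Monotone fun t : Fin (N + 1) ↦ a + (t : ℤ) := fun s t hst ↦
      add_le_add_right (Int.ofNat_le.2 hst) a
    exact pathGraph_induce_connected ((hconn i).preimage_mono hmono)
      ⟨⟨(f p - a).toNat, by omega⟩, p, hp, show f p = a + ((f p - a).toNat : ℤ) by omega⟩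

theorem IsGridPath.ordConnected_image_snd {P : Set (ℤ × ℤ)} (hP : IsGridPath P) :
    (Prod.snd '' P).OrdConnected :=
  ordConnected_image_of_preconnected_induce (G := latticeGraph) Prod.snd
    (fun p q (h : _ = 1) ↦ by omega) hP.2.2.1.connected.preconnected

theorem stmt18_general {ι : Type} [Fintype ι] (l : ℕ)
    (P : ι → Set (ℤ × ℤ)) (hpath : ∀ i, IsGridPath (P i))
    (hx : ∀ i, ∀ p ∈ P i, 1 ≤ p.1 ∧ p.1 ≤ (l : ℤ)) :
    ∃ td : TreeDecomp (intersectionGraph P),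
      td.IndepNumLE l ∧ treeAlpha (intersectionGraph P) ≤ l := by
  have hrows : (⋃ i, Prod.snd '' P i).Finite := Set.finite_iUnion fun i ↦ (hpath i).1.image _
  obtain ⟨a, ha⟩ := hrows.bddBelow
  obtain ⟨b, hb⟩ := hrows.bddAbove
  have hrange : ∀ i, ∀ p ∈ P i, p.2 ∈ Set.Icc a (a + (b - a).toNat) := fun i p hp ↦ by
    have hmem : p.2 ∈ ⋃ i, Prod.snd '' P i := Set.mem_iUnion.2 ⟨i, p, hp, rfl⟩
    have := ha hmem
    have := hb hmem
    constructor <;> omega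
  let td := TreeDecomp.ofLevels P Prod.snd a _ (fun i ↦ (hpath i).2.1)
    (fun i ↦ (hpath i).ordConnected_image_snd) hrange
  have hind : td.IndepNumLE l := fun (t : Fin _) ↦ by
    have := indepLE_intersectionGraph_of_inter_nonempty P (td.bag t)
      (Finset.Icc 1 (l : ℤ) ×ˢ {a + (t : ℤ)}) fun i ⟨p, hp, hpt⟩ ↦
        ⟨p, hp, Finset.mem_product.2
          ⟨Finset.mem_Icc.2 (hx i p hp), Finset.mem_singleton.2 hpt⟩⟩
    simpa using this
  exact ⟨td, hind, Nat.sInf_le ⟨td, hind⟩⟩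

/-- the vertex intersection graph of a finite family of grid paths all of whose
points have x-coordinate in `{1, …, ℓ}` has a tree decomposition with independence number at
most `ℓ`. -/
theorem stmt18 {ι : Type} [Fintype ι] (l : ℕ) (hl : 1 ≤ l)
    (P : ι → Set (ℤ × ℤ)) (hpath : ∀ i, IsGridPath (P i))
    (hx : ∀ i, ∀ p ∈ P i, 1 ≤ p.1 ∧ p.1 ≤ (l : ℤ)) :
    ∃ td : TreeDecomp (intersectionGraph P),
      td.IndepNumLE l ∧ treeAlpha (intersectionGraph P) ≤ l :=
  stmt18_general l P hpath hx
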